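/- Last-removed element beats all others pairwise: let l = [s₁, ..., sₘ] be a duplicate-free list, and empty it by repeatedly removing F of the current state; let g be the last element removed. Then for every other element s of l, if s occurs before g in l then F [s, g] = s, and if g occurs before s in l then F [g, s] = s. -/

import Mathlib

/-- `a` occurs (strictly) before `b` in the list `l`. -/
def Before {α : Type*} (a b : α) (l : List α) : Prop :=
  ∃ l₁ l₂ l₃ : List α, l = l₁ ++ a :: (l₂ ++ b :: l₃)

/-- A consistent choice function on lists. -/
structure ConsistentF {α : Type*} (F : List α → Option α) : Prop where
  empty : F [] = none
  mem : ∀ l : List α, l.Nodup → l ≠ [] → ∃ x ∈ l, F l = some x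
  cons : ∀ l₁ l₂ : List α, l₁.Nodup → l₂.Nodup → ∀ a b : α, a ≠ b →
    Before a b l₁ → F l₁ = some a → Before a b l₂ → F l₂ ≠ some b

/-- One removal step: erase `F s` from the state `s`. -/
def remStep {α : Type*} [DecidableEq α] (F : List α → Option α) (s : List α) : List α :=
  match F s with | none => s | some x => s.erase x

/-- The state of the emptying process after `k` removals, starting from `l`. -/
def stateAfter {α : Type*} [DecidableEq α] (F : List α → Option α) (l : List α) (k : ℕ) :
    List α :=
  (remStep F)^[k] l

/-! Every `s ≠ g` leaves the process at some earlier step, when `F` chooses it from a state that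
still contains `g` and lists `s` and `g` in the same order as `l`; consistency then forbids `F`
from choosing `g` out of the pair. -/

namespace List

variable {α : Type*} {a b : α} {l : List α}

theorem pair_sublist_or_pair_sublist (ha : a ∈ l) (hb : b ∈ l) (hab : a ≠ b) :
    [a, b] <+ l ∨ [b, a] <+ l := by
  induction l with
  | nil => simp at ha
  | cons c l ih => grind

theorem Nodup.not_pair_sublist_swap (hl : l.Nodup) (h : [a, b] <+ l) : ¬[b, a] <+ l := by
  induction l with
  | nil => simp at h
  | cons c l ih => grind

end List

section Before

open List

variable {α : Type*} {a b : α} {l t : List α}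

theorem before_iff_pair_sublist : Before a b l ↔ [a, b] <+ l := by
  constructor
  · rintro ⟨l₁, l₂, l₃, rfl⟩
    exact ((singleton_sublist.mpr (by simp)).cons_cons a).trans (sublist_append_right l₁ _)
  · intro h
    induction l with
    | nil => simp at h
    | cons c l ih =>
      cases h with
      | cons _ h =>
        obtain ⟨l₁, l₂, l₃, rfl⟩ := ih h
        exact ⟨c :: l₁, l₂, l₃, rfl⟩
      | cons_cons _ h =>
        obtain ⟨l₂, l₃, rfl⟩ := append_of_mem (h.subset (mem_singleton_self b))
        exact ⟨[], l₂, l₃, rfl⟩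

theorem Before.of_sublist (h : Before a b l) (hl : l.Nodup) (ht : t <+ l) (ha : a ∈ t)
    (hb : b ∈ t) : Before a b t := by
  rw [before_iff_pair_sublist] at h ⊢
  have hab : a ≠ b := by simpa using h.nodup hl
  exact (pair_sublist_or_pair_sublist ha hb hab).resolve_right
    fun h' => hl.not_pair_sublist_swap h (h'.trans ht)

theorem before_pair : Before a b [a, b] := ⟨[], [], [], rfl⟩

end Before

namespace ConsistentF

variable {α : Type*} {F : List α → Option α} {a b : α} {l : List α}

theorem mem_of_eq_some (hF : ConsistentF F) (hl : l.Nodup) (h : F l = some a) : a ∈ l := by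
  rcases eq_or_ne l [] with rfl | hne
  · simp [hF.empty] at h
  · obtain ⟨x, hx, hFx⟩ := hF.mem l hl hne
    rw [h, Option.some_inj] at hFx
    exact hFx ▸ hx

theorem pair_eq_some_or (hF : ConsistentF F) (hab : a ≠ b) :
    F [a, b] = some a ∨ F [a, b] = some b := by
  obtain ⟨x, hx, hFx⟩ := hF.mem [a, b] (by simpa using hab) (List.cons_ne_nil a [b])
  rcases List.mem_pair.mp hx with rfl | rfl
  · exact Or.inl hFx
  · exact Or.inr hFx

theorem pair_eq_some_of_before (hF : ConsistentF F) (hl : l.Nodup) (hab : a ≠ b)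
    (hB : Before a b l) (hFl : F l = some a) : F [a, b] = some a :=
  (hF.pair_eq_some_or hab).resolve_right
    (hF.cons l [a, b] hl (by simpa using hab) a b hab hB hFl before_pair)

theorem pair_eq_some_of_after (hF : ConsistentF F) (hl : l.Nodup) (hab : a ≠ b)
    (hB : Before b a l) (hFl : F l = some a) : F [b, a] = some a :=
  (hF.pair_eq_some_or hab.symm).resolve_left
    fun h => hF.cons [b, a] l (by simpa using hab.symm) hl b a hab.symm before_pair h hB hFl

end ConsistentF

section Emptying

open List

variable {α : Type*} [DecidableEq α] {F : List α → Option α} {l t : List α} {a : α}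

theorem remStep_of_eq_some (h : F t = some a) : remStep F t = t.erase a := by
  simp [remStep, h]

theorem remStep_sublist (F : List α → Option α) (t : List α) : remStep F t <+ t := by
  cases h : F t <;> simp [remStep, h, erase_sublist]

theorem eq_some_of_mem_of_not_mem_remStep (ha : a ∈ t) (h : a ∉ remStep F t) :
    F t = some a := by
  cases hFt : F t with
  | none => simp [remStep, hFt, ha] at h
  | some x =>
    rw [remStep_of_eq_some hFt] at h
    by_contra hxa
    exact h ((mem_erase_of_ne fun hax => hxa (congrArg some hax.symm)).mpr ha)

theorem ConsistentF.length_remStep (hF : ConsistentF F) (ht : t.Nodup) :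
    (remStep F t).length = t.length - 1 := by
  rcases eq_or_ne t [] with rfl | hne
  · simp [remStep, hF.empty]
  · obtain ⟨x, hx, hFx⟩ := hF.mem t ht hne
    rw [remStep_of_eq_some hFx, length_erase_of_mem hx]

theorem stateAfter_succ (F : List α → Option α) (l : List α) (k : ℕ) :
    stateAfter F l (k + 1) = remStep F (stateAfter F l k) :=
  Function.iterate_succ_apply' _ _ _

theorem stateAfter_add (F : List α → Option α) (l : List α) (k j : ℕ) :
    stateAfter F l (k + j) = stateAfter F (stateAfter F l k) j := by
  rw [stateAfter, add_comm, Function.iterate_add_apply]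
  rfl

theorem stateAfter_sublist (F : List α → Option α) (l : List α) (k : ℕ) :
    stateAfter F l k <+ l := by
  induction k with
  | zero => exact Sublist.refl l
  | succ k ih => exact (stateAfter_succ F l k ▸ remStep_sublist F _).trans ih

theorem stateAfter_sublist_of_le (F : List α → Option α) (l : List α) {k m : ℕ} (h : k ≤ m) :
    stateAfter F l m <+ stateAfter F l k := by
  obtain ⟨j, rfl⟩ := Nat.exists_eq_add_of_le h
  rw [stateAfter_add]
  exact stateAfter_sublist F _ j

theorem ConsistentF.length_stateAfter (hF : ConsistentF F) (hl : l.Nodup) (k : ℕ) :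
    (stateAfter F l k).length = l.length - k := by
  induction k with
  | zero => rfl
  | succ k ih =>
    rw [stateAfter_succ, hF.length_remStep ((stateAfter_sublist F l k).nodup hl), ih]
    omega

theorem ConsistentF.stateAfter_length_sub_one_eq_singleton (hF : ConsistentF F) (hl : l.Nodup)
    (hne : l ≠ []) (h : F (stateAfter F l (l.length - 1)) = some a) :
    stateAfter F l (l.length - 1) = [a] := by
  have hlen : (stateAfter F l (l.length - 1)).length = 1 := by
    rw [hF.length_stateAfter hl]
    have := length_pos_iff.mpr hne
    omega
  obtain ⟨x, hx⟩ := length_eq_one_iff.mp hlen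
  have ha := hF.mem_of_eq_some ((stateAfter_sublist F l _).nodup hl) h
  rw [hx, mem_singleton] at ha
  rw [hx, ha]

theorem exists_stateAfter_eq_some_of_not_mem (ha : a ∈ l) {n : ℕ}
    (hn : a ∉ stateAfter F l n) : ∃ k < n, F (stateAfter F l k) = some a := by
  induction n with
  | zero => exact absurd ha hn
  | succ n ih =>
    by_cases han : a ∈ stateAfter F l n
    · rw [stateAfter_succ] at hn
      exact ⟨n, n.lt_succ_self, eq_some_of_mem_of_not_mem_remStep han hn⟩
    · obtain ⟨k, hk, hFk⟩ := ih han
      exact ⟨k, hk.trans n.lt_succ_self, hFk⟩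

end Emptying

theorem stmt10_general {α : Type*} [DecidableEq α] (F : List α → Option α) (hF : ConsistentF F)
    (l : List α) (hnd : l.Nodup) (g : α)
    (hg : F (stateAfter F l (l.length - 1)) = some g) :
    ∀ s ∈ l, s ≠ g →
      (Before s g l → F [s, g] = some s) ∧ (Before g s l → F [g, s] = some s) := by
  intro s hs hsg
  have hfinal := hF.stateAfter_length_sub_one_eq_singleton hnd (List.ne_nil_of_mem hs) hg
  have hs_removed : s ∉ stateAfter F l (l.length - 1) := by simp [hfinal, hsg]
  obtain ⟨k, hk, hFk⟩ := exists_stateAfter_eq_some_of_not_mem hs hs_removed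
  have hndk := (stateAfter_sublist F l k).nodup hnd
  have hsk := hF.mem_of_eq_some hndk hFk
  have hgk : g ∈ stateAfter F l k :=
    (stateAfter_sublist_of_le F l hk.le).subset (hfinal ▸ List.mem_singleton_self g)
  have hsub := stateAfter_sublist F l k
  exact ⟨fun hB => hF.pair_eq_some_of_before hndk hsg (hB.of_sublist hnd hsub hsk hgk) hFk,
    fun hB => hF.pair_eq_some_of_after hndk hsg (hB.of_sublist hnd hsub hgk hsk) hFk⟩

theorem stmt10 {α : Type*} [DecidableEq α] (F : List α → Option α) (hF : ConsistentF F)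
    (l : List α) (hnd : l.Nodup) (hne : l ≠ []) (g : α)
    (hg : F (stateAfter F l (l.length - 1)) = some g) :
    ∀ s ∈ l, s ≠ g →
      (Before s g l → F [s, g] = some s) ∧ (Before g s l → F [g, s] = some s) :=
  stmt10_general F hF l hnd g hg
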